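/- Let m > 0 and N ≥ 1. Then for every n ∈ ℕ with n ≥ N, ‖H̃^N_{z̄^N} e_n‖²_{L²(μ_m)} = N!/m^N, where e_n(z) = (m^{(n+1)/2}/√(n!)) z^n. Consequently H̃^N_{z̄^N} extends to a bounded operator from 𝓕_m to L²(μ_m). -/

import Mathlib

open MeasureTheory Complex Polynomial Filter

noncomputable section

/-- The Gaussian measure `dμ_m(z) = (1/π) e^{-m|z|²} dA(z)` on `ℂ`. -/
def gaussMeasure (m : ℝ) : Measure ℂ :=
  volume.withDensity fun z => ENNReal.ofReal ((1 / Real.pi) * Real.exp (-m * ‖z‖ ^ 2))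

/-- The space `L²(μ_m)`. -/
abbrev Lp2 (m : ℝ) := Lp ℂ 2 (gaussMeasure m)

/-- The polyanalytic Fock space `F^{N,m}`, the `L²(μ_m)`-closure of
`span{ z̄^j z^k : 0 ≤ j ≤ N-1, k ∈ ℕ }`. -/
def polyFock (m : ℝ) (N : ℕ) : Submodule ℂ (Lp2 m) :=
  (Submodule.span ℂ {f : Lp2 m | ∃ j k : ℕ, j < N ∧
      (f : ℂ → ℂ) =ᵐ[gaussMeasure m] fun z => (starRingEnd ℂ) z ^ j * z ^ k}).topologicalClosure

instance (m : ℝ) (N : ℕ) : CompleteSpace (polyFock m N) :=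
  (Submodule.isClosed_topologicalClosure _).completeSpace_coe

/-- The operator `H̃^N_{ḡ}` applied to an analytic polynomial `p`:
`(I - P_{F^{N,m}})(ḡ p)`. -/
def tildeH (m : ℝ) (N : ℕ) (g : ℂ → ℂ) (p : Polynomial ℂ)
    (h : MemLp (fun z : ℂ => (starRingEnd ℂ) (g z) * p.eval z) 2 (gaussMeasure m)) : Lp2 m :=
  h.toLp _ - ((polyFock m N).orthogonalProjectionOnto (h.toLp _) : Lp2 m)

/-- The polynomial giving the normalized monomial basis element
`e_n(z) = (m^{(n+1)/2}/√(n!)) z^n` of `𝓕_m`. -/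
def fockBasisPoly (m : ℝ) (n : ℕ) : Polynomial ℂ :=
  Polynomial.C ((m ^ (((n : ℝ) + 1) / 2) / Real.sqrt (Nat.factorial n) : ℝ) : ℂ) *
    Polynomial.X ^ n

/-! The component of `z̄^N z^n` orthogonal to `F^{N,m}` is the complex Hermite polynomial
`H_{N,n} = ∑_l (-1)^l C(N,l) n(n-1)⋯(n-l+1) m^{-l} z̄^{N-l} z^{n-l}`: its terms with `l ≥ 1` lie
in `F^{N,m}`, and the Gaussian moments `∫ z^a z̄^b dμ_m = δ_{ab} a!/m^{a+1}` turn its inner product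
with `z̄^j z^k`, `j < N`, into an `N`-th finite difference of `C(·, j)`, which vanishes. The
`H_{N,n}` are mutually orthogonal with `‖H_{N,n}‖² = (N!/m^N) ‖z^n‖²`, so on analytic polynomials
`H̃^N_{z̄^N}` is `√(N!/m^N)` times an isometry. -/

open Finset Set
open scoped InnerProductSpace

theorem fwdDiff_iter_choose_of_le {j N : ℕ} (hj : j ≤ N) :
    (fwdDiff 1)^[N] (fun x ↦ x.choose j : ℕ → ℤ) = fun _ ↦ if j = N then 1 else 0 := by
  obtain ⟨k, rfl⟩ := Nat.exists_eq_add_of_le hj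
  have hconst : (fwdDiff 1)^[j] (fun x ↦ x.choose j : ℕ → ℤ) = fun _ ↦ 1 := by
    simpa using fwdDiff_iter_choose 0 j
  rw [add_comm, Function.iterate_add_apply, hconst]
  cases k with
  | zero => simp
  | succ k =>
    rw [Function.iterate_succ_apply, fwdDiff_const,
      Function.iterate_fixed (fwdDiff_const (h := 1) (0 : ℤ))]
    simp

theorem sum_range_neg_one_pow_mul_choose_mul_choose {j N : ℕ} (hj : j ≤ N) (y : ℕ) :
    ∑ l ∈ range (N + 1), (-1 : ℤ) ^ l * N.choose l * (y + N - l).choose j =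
      if j = N then 1 else 0 := by
  have h := congrFun (fwdDiff_iter_choose_of_le hj) y
  rw [fwdDiff_iter_eq_sum_shift, ← sum_range_reflect] at h
  rw [← h]
  refine sum_congr rfl fun l hl ↦ ?_
  have hl : l ≤ N := Nat.lt_succ_iff.mp (mem_range.mp hl)
  rw [Nat.add_sub_cancel, Nat.choose_symm hl, Nat.sub_sub_self hl, smul_eq_mul, smul_eq_mul,
    mul_one, ← Nat.add_sub_assoc hl]

theorem descFactorial_mul_factorial_add_sub {n j l : ℕ} (hl : l ≤ n + j) :
    n.descFactorial l * (n + j - l).factorial =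
      n.factorial * j.factorial * (n + j - l).choose j := by
  rcases le_or_gt l n with hln | hnl
  · have h := Nat.add_choose_mul_factorial_mul_factorial (n - l) j
    rw [← Nat.sub_add_comm hln] at h
    rw [← h, ← Nat.factorial_mul_descFactorial hln]
    ring
  · rw [Nat.descFactorial_eq_zero_iff_lt.mpr hnl, Nat.choose_eq_zero_of_lt (by omega)]
    simp

theorem sum_range_neg_one_pow_mul_choose_mul_descFactorial {N n j : ℕ} (hj : j ≤ N)
    (hN : N ≤ n + j) :
    ∑ l ∈ range (N + 1), (-1 : ℤ) ^ l * N.choose l * n.descFactorial l * (n + j - l).factorial =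
      if j = N then (n.factorial * N.factorial : ℤ) else 0 := by
  calc _ = (n.factorial * j.factorial : ℤ) *
        ∑ l ∈ range (N + 1), (-1 : ℤ) ^ l * N.choose l * (n + j - l).choose j := by
        rw [mul_sum]
        refine sum_congr rfl fun l hl ↦ ?_
        have h := congrArg (Nat.cast (R := ℤ))
          (descFactorial_mul_factorial_add_sub (by have := mem_range.mp hl; omega : l ≤ n + j))
        push_cast at h
        linear_combination ((-1 : ℤ) ^ l * N.choose l) * h
    _ = _ := by
        have h := sum_range_neg_one_pow_mul_choose_mul_choose hj (n + j - N)
        rw [Nat.sub_add_cancel hN] at h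
        rw [h]
        split_ifs with h <;> simp [h]

theorem integral_exp_int_mul_mul_I_Ioo (k : ℤ) :
    ∫ θ in Ioo (-Real.pi) Real.pi, exp (k * θ * I) = if k = 0 then 2 * Real.pi else 0 := by
  rw [← integral_Ioc_eq_integral_Ioo,
    ← intervalIntegral.integral_of_le (by linarith [Real.pi_pos])]
  split_ifs with hk
  · simp [hk]; ring
  · have hc : (k : ℂ) * I ≠ 0 := mul_ne_zero (Int.cast_ne_zero.mpr hk) I_ne_zero
    have hperiod : exp (k * I * Real.pi) = exp (k * I * ↑(-Real.pi)) := by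
      rw [show (k : ℂ) * I * Real.pi = k * I * ↑(-Real.pi) + k * (2 * Real.pi * I) by
        push_cast; ring, exp_add, exp_int_mul_two_pi_mul_I, mul_one]
    simp_rw [mul_right_comm _ _ I]
    rw [integral_exp_mul_complex hc, hperiod, sub_self, zero_div, ofReal_zero]

def gaussDensity (m : ℝ) (z : ℂ) : ℝ := 1 / Real.pi * Real.exp (-m * ‖z‖ ^ 2)

theorem continuous_gaussDensity (m : ℝ) : Continuous (gaussDensity m) := by
  unfold gaussDensity
  fun_prop

theorem toReal_ofReal_gaussDensity (m : ℝ) (z : ℂ) :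
    (ENNReal.ofReal (gaussDensity m z)).toReal = gaussDensity m z :=
  ENNReal.toReal_ofReal (by unfold gaussDensity; positivity)

theorem gaussMeasure_eq_withDensity (m : ℝ) :
    gaussMeasure m = volume.withDensity fun z ↦ ENNReal.ofReal (gaussDensity m z) :=
  rfl

theorem integral_gaussMeasure {E : Type*} [NormedAddCommGroup E] [NormedSpace ℝ E] (m : ℝ)
    (g : ℂ → E) : ∫ z, g z ∂gaussMeasure m = ∫ z, gaussDensity m z • g z := by
  rw [gaussMeasure_eq_withDensity, integral_withDensity_eq_integral_toReal_smul
    (continuous_gaussDensity m).measurable.ennreal_ofReal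
    (ae_of_all _ fun _ ↦ ENNReal.ofReal_lt_top)]
  simp_rw [toReal_ofReal_gaussDensity]

theorem integrable_norm_pow_gaussMeasure {m : ℝ} (hm : 0 < m) (k : ℕ) :
    Integrable (fun z : ℂ ↦ ‖z‖ ^ k) (gaussMeasure m) := by
  rw [gaussMeasure_eq_withDensity, integrable_withDensity_iff
    (continuous_gaussDensity m).measurable.ennreal_ofReal
    (ae_of_all _ fun _ ↦ ENNReal.ofReal_lt_top)]
  simp_rw [toReal_ofReal_gaussDensity, gaussDensity]
  refine (integrable_fun_norm_addHaar volume
    (f := fun r ↦ r ^ k * (1 / Real.pi * Real.exp (-m * r ^ 2)))).mpr ?_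
  have h := (integrable_rpow_mul_exp_neg_mul_sq hm (s := ((k + 1 : ℕ) : ℝ))
    (neg_one_lt_zero.trans_le (Nat.cast_nonneg _))).const_mul (1 / Real.pi)
  refine h.integrableOn.congr_fun (fun r _ ↦ ?_) measurableSet_Ioi
  simp only [Complex.finrank_real_complex, Real.rpow_natCast, smul_eq_mul]
  ring

theorem polarCoord_symm_pow_mul_conj_pow (p : ℝ × ℝ) (a b : ℕ) :
    (Complex.polarCoord.symm p) ^ a * (starRingEnd ℂ) (Complex.polarCoord.symm p) ^ b =
      (p.1 ^ (a + b) : ℝ) * exp (((a : ℤ) - b : ℤ) * p.2 * I) := by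
  have hz : Complex.polarCoord.symm p = p.1 * exp (p.2 * I) := by
    rw [Complex.polarCoord_symm_apply, exp_mul_I, ← ofReal_cos, ← ofReal_sin]
  rw [hz, map_mul, conj_ofReal, ← exp_conj, map_mul, conj_ofReal, conj_I, mul_pow, mul_pow,
    ← exp_nat_mul, ← exp_nat_mul, mul_mul_mul_comm, ← pow_add, ← exp_add]
  push_cast
  ring_nf

theorem integral_Ioi_pow_mul_exp_neg_mul_sq {m : ℝ} (hm : 0 < m) (a : ℕ) :
    ∫ r in Ioi (0 : ℝ), r ^ (2 * a + 1) * Real.exp (-m * r ^ 2) =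
      a.factorial / (2 * m ^ (a + 1)) := by
  have h := _root_.integral_rpow_mul_exp_neg_mul_rpow (p := 2) (q := 2 * a + 1) (b := m)
    two_pos (by linarith [Nat.cast_nonneg (α := ℝ) a]) hm
  have hq : ((2 * a + 1 : ℝ) + 1) / 2 = a + 1 := by ring
  rw [neg_div, hq, Real.Gamma_nat_eq_factorial, Real.rpow_neg hm.le, ← Nat.cast_succ,
    Real.rpow_natCast] at h
  calc _ = ∫ r in Ioi (0 : ℝ), r ^ (2 * (a : ℝ) + 1) * Real.exp (-m * r ^ (2 : ℝ)) := by
        refine setIntegral_congr_fun measurableSet_Ioi fun r _ ↦ ?_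
        norm_cast
    _ = _ := by rw [h]; field_simp

theorem integral_pow_mul_conj_pow_gaussMeasure {m : ℝ} (hm : 0 < m) (a b : ℕ) :
    ∫ z, z ^ a * (starRingEnd ℂ) z ^ b ∂gaussMeasure m =
      if a = b then ((a.factorial / m ^ (a + 1) : ℝ) : ℂ) else 0 := by
  have hpolar (p : ℝ × ℝ) : p.1 • gaussDensity m (Complex.polarCoord.symm p) •
      (Complex.polarCoord.symm p ^ a * (starRingEnd ℂ) (Complex.polarCoord.symm p) ^ b) =
      ((1 / Real.pi * (p.1 ^ (a + b + 1) * Real.exp (-m * p.1 ^ 2)) : ℝ) : ℂ) *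
        exp (((a : ℤ) - b : ℤ) * p.2 * I) := by
    rw [gaussDensity, polarCoord_symm_pow_mul_conj_pow, Complex.norm_polarCoord_symm, sq_abs,
      smul_smul,
      Complex.real_smul]
    push_cast
    ring
  rw [integral_gaussMeasure, ← Complex.integral_comp_polarCoord_symm]
  simp_rw [hpolar]
  rw [polarCoord_target, Measure.volume_eq_prod,
    setIntegral_prod_mul
      (fun r : ℝ ↦ ((1 / Real.pi * (r ^ (a + b + 1) * Real.exp (-m * r ^ 2)) : ℝ) : ℂ))
      (fun θ : ℝ ↦ exp (((a : ℤ) - b : ℤ) * θ * I)), integral_complex_ofReal,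
    integral_exp_int_mul_mul_I_Ioo]
  simp only [sub_eq_zero, Nat.cast_inj]
  split_ifs with hab
  · subst hab
    rw [integral_const_mul, ← two_mul, integral_Ioi_pow_mul_exp_neg_mul_sq hm]
    push_cast
    field_simp
  · rw [ofReal_zero, mul_zero]

theorem norm_sum_smul_sq_of_pairwise_inner_eq_zero {𝕜 E ι : Type*} [RCLike 𝕜]
    [NormedAddCommGroup E] [InnerProductSpace 𝕜 E] {v : ι → E}
    (hv : Pairwise fun i j ↦ ⟪v i, v j⟫_𝕜 = 0) (c : ι → 𝕜) (s : Finset ι) :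
    ‖∑ i ∈ s, c i • v i‖ ^ 2 = ∑ i ∈ s, ‖c i‖ ^ 2 * ‖v i‖ ^ 2 := by
  classical
  induction s using Finset.induction_on with
  | empty => simp
  | insert a s ha ih =>
    have horth : ⟪c a • v a, ∑ i ∈ s, c i • v i⟫_𝕜 = 0 := by
      rw [inner_sum]
      refine Finset.sum_eq_zero fun i hi ↦ ?_
      rw [inner_smul_left, inner_smul_right, hv (ne_of_mem_of_not_mem hi ha).symm, mul_zero,
        mul_zero]
    rw [sum_insert ha, sum_insert ha, norm_add_sq (𝕜 := 𝕜), horth, map_zero, mul_zero, add_zero,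
      ih, norm_smul, mul_pow]

/-- `n.descFactorial l = n (n-1) ⋯ (n-l+1)` vanishes for `l > n`, so sums over `l ≤ N` of terms
carrying this coefficient only see `l ≤ min N n`, and the truncated `n - l` is harmless. -/
def hermiteCoeff (m : ℝ) (N n l : ℕ) : ℝ :=
  (-1) ^ l * N.choose l * n.descFactorial l / m ^ l

theorem sum_hermiteCoeff_mul_ite {m : ℝ} (hm : m ≠ 0) {N j : ℕ} (n k : ℕ) (hj : j ≤ N) :
    ∑ l ∈ range (N + 1), hermiteCoeff m N n l *
        (if N - l + k = n - l + j then ((N - l + k).factorial / m ^ (N - l + k + 1) : ℝ) else 0) =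
      if j = N ∧ k = n then n.factorial * N.factorial / m ^ (n + N + 1) else 0 := by
  by_cases hc : N + k = n + j
  · have hterm : ∀ l ∈ range (N + 1), hermiteCoeff m N n l *
        (if N - l + k = n - l + j then ((N - l + k).factorial / m ^ (N - l + k + 1) : ℝ) else 0) =
        (((-1 : ℤ) ^ l * N.choose l * n.descFactorial l * (n + j - l).factorial : ℤ) : ℝ) /
          m ^ (n + j + 1) := by
      intro l hl
      have hlN : l ≤ N := Nat.lt_succ_iff.mp (mem_range.mp hl)
      rcases le_or_gt l n with hln | hnl
      · rw [if_pos (by omega), show N - l + k = n + j - l by omega, hermiteCoeff,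
          show n + j + 1 = l + (n + j - l + 1) by omega, pow_add m l]
        push_cast
        field_simp
      · simp [hermiteCoeff, Nat.descFactorial_eq_zero_iff_lt.mpr hnl]
    rw [sum_congr rfl hterm, ← sum_div, ← Int.cast_sum,
      sum_range_neg_one_pow_mul_choose_mul_descFactorial hj (by omega)]
    by_cases hjN : j = N
    · subst hjN
      rw [if_pos rfl, if_pos ⟨rfl, by omega⟩]
      push_cast
      ring
    · rw [if_neg hjN, if_neg (fun h ↦ hjN h.1), Int.cast_zero, zero_div]
  · rw [if_neg fun ⟨hjN, hkn⟩ ↦ hc (by omega)]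
    refine sum_eq_zero fun l hl ↦ ?_
    have hlN : l ≤ N := Nat.lt_succ_iff.mp (mem_range.mp hl)
    rcases le_or_gt l n with hln | hnl
    · rw [if_neg (by omega), mul_zero]
    · simp [hermiteCoeff, Nat.descFactorial_eq_zero_iff_lt.mpr hnl]

section L2
variable {m : ℝ} (hm : 0 < m)
include hm

theorem memLp_conj_pow_mul_pow (j k : ℕ) :
    MemLp (fun z : ℂ ↦ (starRingEnd ℂ) z ^ j * z ^ k) 2 (gaussMeasure m) := by
  rw [memLp_two_iff_integrable_sq_norm (by fun_prop)]
  refine (integrable_norm_pow_gaussMeasure hm (2 * (j + k))).congr (ae_of_all _ fun z ↦ ?_)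
  simp only [norm_mul, norm_pow, Complex.norm_conj]
  ring

def monomialLp (j k : ℕ) : Lp2 m := (memLp_conj_pow_mul_pow hm j k).toLp _

theorem inner_monomialLp (a b c d : ℕ) :
    ⟪monomialLp hm a b, monomialLp hm c d⟫_ℂ =
      ((if a + d = b + c then (a + d).factorial / m ^ (a + d + 1) else 0 : ℝ) : ℂ) := by
  rw [L2.inner_def, apply_ite ((↑) : ℝ → ℂ), ofReal_zero,
    ← integral_pow_mul_conj_pow_gaussMeasure hm]
  refine integral_congr_ae ?_
  filter_upwards [(memLp_conj_pow_mul_pow hm a b).coeFn_toLp,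
    (memLp_conj_pow_mul_pow hm c d).coeFn_toLp] with z hab hcd
  rw [monomialLp, monomialLp, hab, hcd, RCLike.inner_apply]
  simp only [map_mul, map_pow, conj_conj]
  ring

theorem monomialLp_mem_polyFock {N j : ℕ} (k : ℕ) (hj : j < N) :
    monomialLp hm j k ∈ polyFock m N :=
  Submodule.le_topologicalClosure _
    (Submodule.subset_span ⟨j, k, hj, (memLp_conj_pow_mul_pow hm j k).coeFn_toLp⟩)

theorem mem_orthogonal_polyFock {N : ℕ} {v : Lp2 m}
    (hv : ∀ j k, j < N → ⟪monomialLp hm j k, v⟫_ℂ = 0) : v ∈ (polyFock m N)ᗮ := by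
  rw [polyFock, Submodule.orthogonal_closure, ← Submodule.span_singleton_le_iff_mem,
    ← Submodule.isOrtho_iff_le, Submodule.isOrtho_span]
  rintro _ rfl f ⟨j, k, hj, hf⟩
  rw [show f = monomialLp hm j k from
    Lp.ext (hf.trans (memLp_conj_pow_mul_pow hm j k).coeFn_toLp.symm)]
  exact inner_eq_zero_symm.mp (hv j k hj)

def hermiteLp (N n : ℕ) : Lp2 m :=
  ∑ l ∈ range (N + 1), (hermiteCoeff m N n l : ℂ) • monomialLp hm (N - l) (n - l)

theorem inner_hermiteLp_monomialLp {N j : ℕ} (n k : ℕ) (hj : j ≤ N) :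
    ⟪hermiteLp hm N n, monomialLp hm j k⟫_ℂ =
      ((if j = N ∧ k = n then n.factorial * N.factorial / m ^ (n + N + 1) else 0 : ℝ) : ℂ) := by
  simp_rw [hermiteLp, sum_inner, inner_smul_left, conj_ofReal, inner_monomialLp, ← ofReal_mul,
    ← ofReal_sum, sum_hermiteCoeff_mul_ite hm.ne' n k hj]

theorem hermiteLp_mem_orthogonal (N n : ℕ) : hermiteLp hm N n ∈ (polyFock m N)ᗮ :=
  mem_orthogonal_polyFock hm fun j k hj ↦ by
    rw [inner_eq_zero_symm, inner_hermiteLp_monomialLp hm n k hj.le, if_neg (fun h ↦ hj.ne h.1),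
      ofReal_zero]

theorem monomialLp_sub_hermiteLp_mem (N n : ℕ) :
    monomialLp hm N n - hermiteLp hm N n ∈ polyFock m N := by
  rw [hermiteLp, sum_range_succ', hermiteCoeff]
  simp only [pow_zero, Nat.choose_zero_right, Nat.descFactorial_zero, Nat.cast_one, mul_one,
    div_one, ofReal_one, one_smul, Nat.sub_zero, sub_add_cancel_right]
  exact Submodule.neg_mem _ (Submodule.sum_mem _ fun l hl ↦
    Submodule.smul_mem _ _ (monomialLp_mem_polyFock hm _ (by have := mem_range.mp hl; omega)))

theorem starProjection_orthogonal_monomialLp (N n : ℕ) :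
    (polyFock m N)ᗮ.starProjection (monomialLp hm N n) = hermiteLp hm N n :=
  Submodule.eq_starProjection_of_mem_orthogonal (hermiteLp_mem_orthogonal hm N n)
    (Submodule.le_orthogonal_orthogonal _ (monomialLp_sub_hermiteLp_mem hm N n))

theorem inner_hermiteLp (N n n' : ℕ) :
    ⟪hermiteLp hm N n, hermiteLp hm N n'⟫_ℂ =
      ((if n' = n then n.factorial * N.factorial / m ^ (n + N + 1) else 0 : ℝ) : ℂ) := by
  have hdiff : ⟪hermiteLp hm N n, monomialLp hm N n' - hermiteLp hm N n'⟫_ℂ = 0 :=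
    Submodule.inner_left_of_mem_orthogonal (monomialLp_sub_hermiteLp_mem hm N n')
      (hermiteLp_mem_orthogonal hm N n)
  rw [inner_sub_right, sub_eq_zero, inner_hermiteLp_monomialLp hm n n' le_rfl] at hdiff
  simp [← hdiff]

theorem norm_sq_monomialLp (j k : ℕ) :
    ‖monomialLp hm j k‖ ^ 2 = (j + k).factorial / m ^ (j + k + 1) := by
  rw [norm_sq_eq_re_inner (𝕜 := ℂ), inner_monomialLp, if_pos (add_comm j k), RCLike.re_to_complex,
    ofReal_re]

theorem norm_sq_hermiteLp (N n : ℕ) :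
    ‖hermiteLp hm N n‖ ^ 2 = N.factorial / m ^ N * ‖monomialLp hm 0 n‖ ^ 2 := by
  rw [norm_sq_eq_re_inner (𝕜 := ℂ), inner_hermiteLp, if_pos rfl, RCLike.re_to_complex, ofReal_re,
    norm_sq_monomialLp, zero_add, show n + N + 1 = N + (n + 1) by ring, pow_add]
  field_simp

theorem toLp_eq_sum_monomialLp {f : ℂ → ℂ} (j : ℕ) (p : ℂ[X])
    (hf : ∀ z, f z = (starRingEnd ℂ) z ^ j * p.eval z) (h : MemLp f 2 (gaussMeasure m)) :
    h.toLp f = ∑ n ∈ p.support, p.coeff n • monomialLp hm j n := by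
  have hmono : ∀ᵐ z ∂gaussMeasure m, ∀ n ∈ p.support,
      (p.coeff n • monomialLp hm j n) z = p.coeff n * ((starRingEnd ℂ) z ^ j * z ^ n) := by
    refine (eventually_all_finset _).mpr fun n _ ↦ ?_
    filter_upwards [Lp.coeFn_smul (p.coeff n) (monomialLp hm j n),
      (memLp_conj_pow_mul_pow hm j n).coeFn_toLp] with z hsmul hz
    rw [hsmul, Pi.smul_apply, monomialLp, hz, smul_eq_mul]
  refine Lp.ext ?_
  filter_upwards [h.coeFn_toLp, hmono,
    Lp.coeFn_fun_finsetSum p.support fun n ↦ p.coeff n • monomialLp hm j n] with z hz hmono hsum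
  rw [hz, hsum, sum_congr rfl hmono, hf, eval_eq_sum, Polynomial.sum, mul_sum]
  exact sum_congr rfl fun n _ ↦ by ring

theorem memLp_eval (p : ℂ[X]) : MemLp (fun z ↦ p.eval z) 2 (gaussMeasure m) := by
  simp_rw [eval_eq_sum, Polynomial.sum]
  exact memLp_finsetSum _ fun n _ ↦ by
    simpa using (memLp_conj_pow_mul_pow hm 0 n).const_mul (p.coeff n)

theorem tildeH_pow_eq_sum {N : ℕ} (p : ℂ[X])
    (h : MemLp (fun z ↦ (starRingEnd ℂ) (z ^ N) * p.eval z) 2 (gaussMeasure m)) :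
    tildeH m N (fun z ↦ z ^ N) p h = ∑ n ∈ p.support, p.coeff n • hermiteLp hm N n := by
  rw [tildeH, Submodule.coe_orthogonalProjectionOnto_apply,
    ← Submodule.starProjection_orthogonal_val,
    toLp_eq_sum_monomialLp hm N p (fun z ↦ by rw [map_pow]), map_sum]
  simp_rw [map_smul, starProjection_orthogonal_monomialLp]

theorem norm_sq_tildeH_pow {N : ℕ} (p : ℂ[X])
    (h : MemLp (fun z ↦ (starRingEnd ℂ) (z ^ N) * p.eval z) 2 (gaussMeasure m))
    (hp : MemLp (fun z ↦ p.eval z) 2 (gaussMeasure m)) :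
    ‖tildeH m N (fun z ↦ z ^ N) p h‖ ^ 2 = N.factorial / m ^ N * ‖hp.toLp _‖ ^ 2 := by
  have hH : Pairwise fun n n' ↦ ⟪hermiteLp hm N n, hermiteLp hm N n'⟫_ℂ = 0 := fun n n' hne ↦ by
    dsimp only
    rw [inner_hermiteLp, if_neg hne.symm, ofReal_zero]
  have hmono : Pairwise fun n n' ↦ ⟪monomialLp hm 0 n, monomialLp hm 0 n'⟫_ℂ = 0 :=
    fun n n' hne ↦ by dsimp only; rw [inner_monomialLp, if_neg (by omega), ofReal_zero]
  rw [tildeH_pow_eq_sum hm p h, toLp_eq_sum_monomialLp hm 0 p (fun z ↦ by simp),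
    norm_sum_smul_sq_of_pairwise_inner_eq_zero hH,
    norm_sum_smul_sq_of_pairwise_inner_eq_zero hmono, mul_sum]
  simp_rw [norm_sq_hermiteLp]
  exact sum_congr rfl fun n _ ↦ by ring

theorem norm_toLp_fockBasisPoly (n : ℕ)
    (h : MemLp (fun z ↦ (fockBasisPoly m n).eval z) 2 (gaussMeasure m)) : ‖h.toLp _‖ = 1 := by
  have hfac : (0 : ℝ) < n.factorial := by positivity
  have hc : (m ^ (((n : ℝ) + 1) / 2) / Real.sqrt n.factorial) ^ 2 =
      m ^ (n + 1) / n.factorial := by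
    rw [div_pow, Real.sq_sqrt hfac.le, ← Real.rpow_natCast, ← Real.rpow_mul hm.le,
      show ((n : ℝ) + 1) / 2 * ((2 : ℕ) : ℝ) = ((n + 1 : ℕ) : ℝ) by push_cast; ring,
      Real.rpow_natCast]
  have hc0 : ((m ^ (((n : ℝ) + 1) / 2) / Real.sqrt n.factorial : ℝ) : ℂ) ≠ 0 :=
    ofReal_ne_zero.mpr (by positivity)
  rw [toLp_eq_sum_monomialLp hm 0 (fockBasisPoly m n) (fun z ↦ by simp), fockBasisPoly,
    support_C_mul_X_pow _ hc0, sum_singleton, coeff_C_mul_X_pow, if_pos rfl, norm_smul,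
    ← pow_eq_one_iff_of_nonneg (by positivity) two_ne_zero, mul_pow, norm_real, Real.norm_eq_abs,
    sq_abs, hc, norm_sq_monomialLp, zero_add]
  field_simp

end L2

theorem tildeH_critical_norm_sq_general (m : ℝ) (hm : 0 < m) (N : ℕ)
    (h : ∀ n : ℕ, MemLp (fun z : ℂ => (starRingEnd ℂ) (z ^ N) * (fockBasisPoly m n).eval z) 2
      (gaussMeasure m)) :
    (∀ n : ℕ, N ≤ n →
        ‖tildeH m N (fun z => z ^ N) (fockBasisPoly m n) (h n)‖ ^ 2 =
          (Nat.factorial N : ℝ) / m ^ N) ∧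
      ∃ C : ℝ, 0 ≤ C ∧ ∀ (p : Polynomial ℂ)
        (h1 : MemLp (fun z : ℂ => (starRingEnd ℂ) (z ^ N) * p.eval z) 2 (gaussMeasure m))
        (h2 : MemLp (fun z : ℂ => p.eval z) 2 (gaussMeasure m)),
        ‖tildeH m N (fun z => z ^ N) p h1‖ ≤ C * ‖h2.toLp _‖ := by
  refine ⟨fun n _ ↦ ?_, Real.sqrt (N.factorial / m ^ N), Real.sqrt_nonneg _, fun p h1 h2 ↦ ?_⟩
  · have hn := memLp_eval hm (fockBasisPoly m n)
    rw [norm_sq_tildeH_pow hm _ (h n) hn, norm_toLp_fockBasisPoly hm n hn, one_pow, mul_one]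
  · rw [← Real.sqrt_sq (norm_nonneg (tildeH _ _ _ p h1)), norm_sq_tildeH_pow hm p h1 h2,
      Real.sqrt_mul (by positivity), Real.sqrt_sq (norm_nonneg _)]

/-- For every `n ≥ N`, `‖H̃^N_{z̄^N} e_n‖² = N!/m^N`; consequently
`H̃^N_{z̄^N}` extends to a bounded operator from `𝓕_m` to `L²(μ_m)`. -/
theorem tildeH_critical_norm_sq (m : ℝ) (hm : 0 < m) (N : ℕ) (hN : 1 ≤ N)
    (h : ∀ n : ℕ, MemLp (fun z : ℂ => (starRingEnd ℂ) (z ^ N) * (fockBasisPoly m n).eval z) 2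
      (gaussMeasure m)) :
    (∀ n : ℕ, N ≤ n →
        ‖tildeH m N (fun z => z ^ N) (fockBasisPoly m n) (h n)‖ ^ 2 =
          (Nat.factorial N : ℝ) / m ^ N) ∧
      ∃ C : ℝ, 0 ≤ C ∧ ∀ (p : Polynomial ℂ)
        (h1 : MemLp (fun z : ℂ => (starRingEnd ℂ) (z ^ N) * p.eval z) 2 (gaussMeasure m))
        (h2 : MemLp (fun z : ℂ => p.eval z) 2 (gaussMeasure m)),
        ‖tildeH m N (fun z => z ^ N) p h1‖ ≤ C * ‖h2.toLp _‖ :=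
  tildeH_critical_norm_sq_general m hm N h
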